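/- arXiv:2505.14262 — 3 statements merged into one kernel-verified Lean document; each statement's English description precedes it below -/
import Mathlib

section
/- Let τ > 0, let M ≥ 1 be an integer, set Δ = τ/M, and let p ≥ 2, κ > 0 with κΔ < 1, and b₁, b₃ ≥ 0, b₂ > 0 be real numbers satisfying (i) b₂ − 2^{(p/2)+1}κ − b₃e^{2κτ} ≥ 0 and (ii) (1 − κΔ)^{−M} ≤ e^{2κτ}. Let u : {−M, −M+1, −M+2, …} → [0,∞) and v : {0, 1, 2, …} → [0,∞) be such that u_k ≤ v_k for all k ≥ 0, and for all k ≥ 1: v_k ≤ (1 − κΔ)·v_{k−1} + (pΔ/2)·(b₁ + 2^{(p/2)+1}κ − (b₂ − 2^{(p/2)+1}κ)·u_{k−1} + b₃·u_{k−1−M}). Then for every k ≥ 0: u_k ≤ v₀ + (p/(2κ))·(b₁ + 2^{(p/2)+1}κ) + (p·b₃·e^{2κτ}/(2κ))·max_{−M ≤ i ≤ −1} u_i. -/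
lemma stmt7_geom (q e : ℝ) (hq : 0 < q) (hqr : q * (1 - e) = 1) :
    ∀ N : ℕ, e * ∑ i ∈ Finset.Icc (-(N : ℤ)) (-1), q ^ (i + 1 + (N : ℤ)) ≤ q ^ N - 1 := by
  intro N
  induction N with
  | zero => simp
  | succ N ih =>
    have hsplit : Finset.Icc (-((N : ℤ) + 1)) (-1)
        = insert (-((N : ℤ) + 1)) (Finset.Icc (-(N : ℤ)) (-1)) := by
      ext x; simp only [Finset.mem_Icc, Finset.mem_insert]; omega
    have hnm : (-((N : ℤ) + 1)) ∉ Finset.Icc (-(N : ℤ)) (-1) := by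
      simp only [Finset.mem_Icc]; omega
    have hcast : (((N + 1 : ℕ)) : ℤ) = (N : ℤ) + 1 := by push_cast; ring
    rw [hcast, hsplit, Finset.sum_insert hnm]
    have hterm : q ^ ((-((N : ℤ) + 1)) + 1 + ((N : ℤ) + 1)) = q := by
      norm_num
    have hrest : ∑ i ∈ Finset.Icc (-(N : ℤ)) (-1), q ^ (i + 1 + ((N : ℤ) + 1))
        = (∑ i ∈ Finset.Icc (-(N : ℤ)) (-1), q ^ (i + 1 + (N : ℤ))) * q := by
      rw [Finset.sum_mul]
      refine Finset.sum_congr rfl fun i _ => ?_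
      rw [show i + 1 + ((N : ℤ) + 1) = (i + 1 + (N : ℤ)) + 1 by ring,
        zpow_add_one₀ (ne_of_gt hq)]
    rw [hterm, hrest]
    have hmul := mul_le_mul_of_nonneg_left ih (le_of_lt hq)
    have hpow : q ^ (N + 1) = q ^ N * q := pow_succ q N
    nlinarith [hmul, hpow]

theorem stmt_7 (τ : ℝ) (hτ : 0 < τ) (M : ℕ) (hM : 1 ≤ M) (Δ : ℝ) (hΔ : Δ = τ / M)
    (p κ b₁ b₂ b₃ : ℝ) (hp : 2 ≤ p) (hκ : 0 < κ) (hκΔ : κ * Δ < 1)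
    (hb₁ : 0 ≤ b₁) (hb₃ : 0 ≤ b₃) (hb₂ : 0 < b₂)
    (hcond1 : b₂ - (2 : ℝ) ^ (p / 2 + 1) * κ - b₃ * Real.exp (2 * κ * τ) ≥ 0)
    (hcond2 : (1 - κ * Δ) ^ (-(M : ℤ)) ≤ Real.exp (2 * κ * τ))
    (u : ℤ → ℝ) (v : ℕ → ℝ)
    (hu_nonneg : ∀ i : ℤ, -(M : ℤ) ≤ i → 0 ≤ u i)
    (hv_nonneg : ∀ k : ℕ, 0 ≤ v k)
    (huv : ∀ k : ℕ, u k ≤ v k)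
    (hrec : ∀ k : ℕ, 1 ≤ k →
      v k ≤ (1 - κ * Δ) * v (k - 1)
        + (p * Δ / 2) * (b₁ + (2 : ℝ) ^ (p / 2 + 1) * κ
            - (b₂ - (2 : ℝ) ^ (p / 2 + 1) * κ) * u ((k : ℤ) - 1)
            + b₃ * u ((k : ℤ) - 1 - M))) :
    ∀ k : ℕ, u k ≤ v 0 + (p / (2 * κ)) * (b₁ + (2 : ℝ) ^ (p / 2 + 1) * κ)
      + (p * b₃ * Real.exp (2 * κ * τ) / (2 * κ))
        * ((Finset.Icc (-(M : ℤ)) (-1)).sup' (Finset.nonempty_Icc.mpr (by omega)) u) := by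
  -- abbreviations
  set E : ℝ := Real.exp (2 * κ * τ) with hE
  set A : ℝ := b₁ + (2 : ℝ) ^ (p / 2 + 1) * κ with hA
  set B : ℝ := b₂ - (2 : ℝ) ^ (p / 2 + 1) * κ with hB
  set U : ℝ := (Finset.Icc (-(M : ℤ)) (-1)).sup' (Finset.nonempty_Icc.mpr (by omega)) u with hU
  have hΔpos : 0 < Δ := by
    rw [hΔ]
    have : (0 : ℝ) < M := by exact_mod_cast Nat.lt_of_lt_of_le Nat.zero_lt_one hM
    positivity
  have hpow2 : (0 : ℝ) < (2 : ℝ) ^ (p / 2 + 1) := Real.rpow_pos_of_pos (by norm_num) _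
  have hApos : 0 < A := by
    have : 0 < (2 : ℝ) ^ (p / 2 + 1) * κ := mul_pos hpow2 hκ
    rw [hA]; linarith
  have hEpos : 0 < E := Real.exp_pos _
  have hBE : b₃ * E ≤ B := by linarith [hcond1]
  have hBpos : 0 ≤ B := le_trans (mul_nonneg hb₃ (le_of_lt hEpos)) hBE
  set r : ℝ := 1 - κ * Δ with hr
  have hr0 : 0 < r := by rw [hr]; linarith
  have hr1 : r < 1 := by
    have : 0 < κ * Δ := mul_pos hκ hΔpos
    rw [hr]; linarith
  set q : ℝ := r⁻¹ with hq
  have hq0 : 0 < q := inv_pos.mpr hr0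
  have hqr : q * r = 1 := inv_mul_cancel₀ (ne_of_gt hr0)
  have hq1 : 1 ≤ q := by
    rw [hq]; rw [le_inv_comm₀ one_pos hr0]; simpa using le_of_lt hr1
  have hqME : q ^ M ≤ E := by
    have : r ^ (-(M : ℤ)) = q ^ M := by
      rw [zpow_neg, zpow_natCast, hq, inv_pow]
    rw [← this]; exact hcond2
  -- the weighted window sum
  set S : ℕ → ℝ := fun k => ∑ i ∈ Finset.Icc ((k : ℤ) - M) ((k : ℤ) - 1),
      q ^ (i + 1 + (M : ℤ)) * u i with hS
  have hS_nonneg : ∀ k : ℕ, 0 ≤ S k := by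
    intro k
    apply Finset.sum_nonneg
    intro i hi
    rw [Finset.mem_Icc] at hi
    have hiM : -(M : ℤ) ≤ i := by omega
    exact mul_nonneg (le_of_lt (zpow_pos hq0 _)) (hu_nonneg i hiM)
  have hiU : ∀ i ∈ Finset.Icc (-(M : ℤ)) (-1), u i ≤ U :=
    fun i hi => Finset.le_sup' u hi
  have hU0 : 0 ≤ U := by
    have h1 : (-1 : ℤ) ∈ Finset.Icc (-(M : ℤ)) (-1) := by
      simp only [Finset.mem_Icc]; omega
    exact le_trans (hu_nonneg (-1) (by omega)) (hiU (-1) h1)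
  set c : ℝ := p * Δ / 2 with hc
  have hc0 : 0 < c := by rw [hc]; positivity
  set X : ℝ := p * b₃ * E / (2 * κ) with hX
  have hX0 : 0 ≤ X := by rw [hX]; positivity
  set Y : ℝ := (p / (2 * κ)) * A with hY
  have hY0 : 0 ≤ Y := by
    rw [hY]; exact mul_nonneg (by positivity) (le_of_lt hApos)
  -- bound on S 0
  have hS0 : c * b₃ * S 0 ≤ X * U := by
    have hgeom := stmt7_geom q (κ * Δ) hq0 (by rw [← hr]; exact hqr) M
    have hSle : S 0 ≤ (∑ i ∈ Finset.Icc (-(M : ℤ)) (-1), q ^ (i + 1 + (M : ℤ))) * U := by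
      rw [hS]
      simp only [Nat.cast_zero, zero_sub]
      rw [Finset.sum_mul]
      apply Finset.sum_le_sum
      intro i hi
      exact mul_le_mul_of_nonneg_left (hiU i hi) (le_of_lt (zpow_pos hq0 _))
    have hGnn : 0 ≤ ∑ i ∈ Finset.Icc (-(M : ℤ)) (-1), q ^ (i + 1 + (M : ℤ)) :=
      Finset.sum_nonneg fun i _ => le_of_lt (zpow_pos hq0 _)
    have h1 : (κ * Δ) * S 0 ≤ (q ^ M - 1) * U := by
      calc (κ * Δ) * S 0 ≤ (κ * Δ) * ((∑ i ∈ Finset.Icc (-(M : ℤ)) (-1),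
              q ^ (i + 1 + (M : ℤ))) * U) := by
            apply mul_le_mul_of_nonneg_left hSle
            positivity
        _ = ((κ * Δ) * ∑ i ∈ Finset.Icc (-(M : ℤ)) (-1), q ^ (i + 1 + (M : ℤ))) * U := by ring
        _ ≤ (q ^ M - 1) * U := mul_le_mul_of_nonneg_right hgeom hU0
    have h2 : (κ * Δ) * S 0 ≤ E * U := by
      have : (q ^ M - 1) * U ≤ E * U := by
        apply mul_le_mul_of_nonneg_right _ hU0
        linarith
      linarith
    -- c * b₃ * S 0 = (p * b₃ / (2 * κ)) * ((κ * Δ) * S 0) ≤ (p * b₃/(2κ)) * (E * U) = X * U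
    have hrw : c * b₃ * S 0 = (p * b₃ / (2 * κ)) * ((κ * Δ) * S 0) := by
      rw [hc]; field_simp
    have hXrw : X * U = (p * b₃ / (2 * κ)) * (E * U) := by rw [hX]; ring
    rw [hrw, hXrw]
    apply mul_le_mul_of_nonneg_left h2
    positivity
  -- main induction
  have key : ∀ k : ℕ, q ^ k * v k + c * b₃ * S k ≤ v 0 + X * U + Y * (q ^ k - 1) := by
    intro k
    induction k with
    | zero => simp only [pow_zero, one_mul, sub_self, mul_zero, add_zero]; linarith
    | succ k ih =>
      -- telescoping for S
      have hsplit1 : Finset.Icc (((k : ℤ) + 1) - M) (((k : ℤ) + 1) - 1)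
          = insert (k : ℤ) (Finset.Icc ((k : ℤ) + 1 - M) ((k : ℤ) - 1)) := by
        ext x; simp only [Finset.mem_Icc, Finset.mem_insert]; omega
      have hsplit2 : Finset.Icc ((k : ℤ) - M) ((k : ℤ) - 1)
          = insert ((k : ℤ) - M) (Finset.Icc ((k : ℤ) + 1 - M) ((k : ℤ) - 1)) := by
        ext x; simp only [Finset.mem_Icc, Finset.mem_insert]; omega
      have hmem1 : (k : ℤ) ∉ Finset.Icc ((k : ℤ) + 1 - M) ((k : ℤ) - 1) := by
        simp only [Finset.mem_Icc]; omega
      have hmem2 : (k : ℤ) - M ∉ Finset.Icc ((k : ℤ) + 1 - M) ((k : ℤ) - 1) := by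
        simp only [Finset.mem_Icc]; omega
      have htele : S (k + 1) = S k + q ^ ((k : ℤ) + 1 + M) * u k
          - q ^ ((k : ℤ) + 1) * u ((k : ℤ) - M) := by
        rw [hS]
        simp only
        have hcast : (((k + 1 : ℕ)) : ℤ) = (k : ℤ) + 1 := by push_cast; ring
        rw [hcast, hsplit1, hsplit2, Finset.sum_insert hmem1, Finset.sum_insert hmem2]
        have he1 : ((k : ℤ)) + 1 + (M : ℤ) = (k : ℤ) + 1 + M := by ring
        have he2 : ((k : ℤ) - M) + 1 + (M : ℤ) = (k : ℤ) + 1 := by ring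
        rw [he2]
        ring
      -- recursion
      have hrk := hrec (k + 1) (by omega)
      have hidx1 : ((k + 1 : ℕ) : ℤ) - 1 = (k : ℤ) := by push_cast; ring
      have hidx2 : ((k + 1 : ℕ) : ℤ) - 1 - M = (k : ℤ) - M := by push_cast; ring
      rw [hidx1, Nat.add_sub_cancel] at hrk
      have hstep : q ^ (k + 1) * v (k + 1)
          ≤ q ^ k * v k + q ^ (k + 1) * (c * (A - B * u (k : ℤ) + b₃ * u ((k : ℤ) - M))) := by
        have h := mul_le_mul_of_nonneg_left hrk (le_of_lt (pow_pos hq0 (k + 1)))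
        have hqk : q ^ (k + 1) * r = q ^ k := by
          rw [pow_succ, mul_assoc, hqr, mul_one]
        calc q ^ (k + 1) * v (k + 1)
            ≤ q ^ (k + 1) * (r * v k + c * (A - B * u (k : ℤ) + b₃ * u ((k : ℤ) - M))) := by
              rw [hr, hA, hB, hc]; exact h
          _ = (q ^ (k + 1) * r) * v k
              + q ^ (k + 1) * (c * (A - B * u (k : ℤ) + b₃ * u ((k : ℤ) - M))) := by ring
          _ = q ^ k * v k
              + q ^ (k + 1) * (c * (A - B * u (k : ℤ) + b₃ * u ((k : ℤ) - M))) := by rw [hqk]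
      -- the delayed-term cancellation
      have hqkM : q ^ ((k : ℤ) + 1 + M) = q ^ (k + 1) * q ^ M := by
        rw [← zpow_natCast q (k + 1), ← zpow_natCast q M, ← zpow_add₀ (ne_of_gt hq0)]
        push_cast; ring_nf
      have hqk1 : q ^ ((k : ℤ) + 1) = q ^ (k + 1) := by
        rw [← zpow_natCast q (k + 1)]; push_cast; ring_nf
      have huk : 0 ≤ u (k : ℤ) := hu_nonneg _ (by omega)
      have hcancel : c * b₃ * (q ^ ((k : ℤ) + 1 + M) * u (k : ℤ))
          ≤ q ^ (k + 1) * (c * (B * u (k : ℤ))) := by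
        rw [hqkM]
        have h1 : b₃ * q ^ M ≤ B :=
          le_trans (mul_le_mul_of_nonneg_left hqME hb₃) hBE
        have hnn : 0 ≤ c * u (k : ℤ) * q ^ (k + 1) :=
          mul_nonneg (mul_nonneg (le_of_lt hc0) huk) (le_of_lt (pow_pos hq0 (k + 1)))
        calc c * b₃ * (q ^ (k + 1) * q ^ M * u (k : ℤ))
            = (c * u (k : ℤ) * q ^ (k + 1)) * (b₃ * q ^ M) := by ring
          _ ≤ (c * u (k : ℤ) * q ^ (k + 1)) * B := mul_le_mul_of_nonneg_left h1 hnn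
          _ = q ^ (k + 1) * (c * (B * u (k : ℤ))) := by ring
      -- the killed Y-budget
      have hbudget : q ^ (k + 1) * (c * A) = Y * (q ^ (k + 1) - q ^ k) := by
        have hqd : q ^ (k + 1) - q ^ k = q ^ (k + 1) * (κ * Δ) := by
          have : q ^ k = q ^ (k + 1) * r := by rw [pow_succ, mul_assoc, hqr, mul_one]
          rw [this, hr]; ring
        rw [hqd, hY, hc]
        field_simp
      have hSk1 := htele
      -- combine
      have final : q ^ (k + 1) * v (k + 1) + c * b₃ * S (k + 1)
          ≤ (q ^ k * v k + c * b₃ * S k) + Y * (q ^ (k + 1) - q ^ k) := by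
        rw [hSk1]
        have e1 : c * b₃ * (S k + q ^ ((k : ℤ) + 1 + M) * u (k : ℤ)
            - q ^ ((k : ℤ) + 1) * u ((k : ℤ) - M))
            = c * b₃ * S k + c * b₃ * (q ^ ((k : ℤ) + 1 + M) * u (k : ℤ))
              - q ^ (k + 1) * (c * (b₃ * u ((k : ℤ) - M))) := by
          rw [hqk1]; ring
        rw [e1]
        have e2 : q ^ (k + 1) * (c * (A - B * u (k : ℤ) + b₃ * u ((k : ℤ) - M)))
            = q ^ (k + 1) * (c * A) - q ^ (k + 1) * (c * (B * u (k : ℤ)))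
              + q ^ (k + 1) * (c * (b₃ * u ((k : ℤ) - M))) := by ring
        rw [e2] at hstep
        linarith [hstep, hcancel, hbudget.le, hbudget.ge]
      calc q ^ (k + 1) * v (k + 1) + c * b₃ * S (k + 1)
          ≤ (q ^ k * v k + c * b₃ * S k) + Y * (q ^ (k + 1) - q ^ k) := final
        _ ≤ (v 0 + X * U + Y * (q ^ k - 1)) + Y * (q ^ (k + 1) - q ^ k) := by linarith
        _ = v 0 + X * U + Y * (q ^ (k + 1) - 1) := by ring
  -- conclude
  intro k
  have hkey := key k
  have hrq : r * q = 1 := by rw [mul_comm]; exact hqr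
  have hrqk : r ^ k * q ^ k = 1 := by rw [← mul_pow, hrq, one_pow]
  have hrk0 : 0 < r ^ k := pow_pos hr0 k
  have hrk1 : r ^ k ≤ 1 := pow_le_one₀ (le_of_lt hr0) (le_of_lt hr1)
  have hSnn : 0 ≤ c * b₃ * S k := mul_nonneg (mul_nonneg (le_of_lt hc0) hb₃) (hS_nonneg k)
  have h1 : q ^ k * v k ≤ v 0 + X * U + Y * (q ^ k - 1) := by linarith
  have h2 : v k ≤ r ^ k * (v 0 + X * U + Y * (q ^ k - 1)) := by
    have := mul_le_mul_of_nonneg_left h1 (le_of_lt hrk0)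
    calc v k = (r ^ k * q ^ k) * v k := by rw [hrqk, one_mul]
      _ = r ^ k * (q ^ k * v k) := by ring
      _ ≤ r ^ k * (v 0 + X * U + Y * (q ^ k - 1)) := this
  have h3 : r ^ k * (v 0 + X * U + Y * (q ^ k - 1))
      = r ^ k * (v 0 + X * U) + Y * (1 - r ^ k) := by
    linear_combination Y * hrqk
  have h4 : v k ≤ v 0 + X * U + Y := by
    have hv0 : 0 ≤ v 0 := hv_nonneg 0
    have hXU : 0 ≤ X * U := mul_nonneg hX0 hU0
    have hle1 : r ^ k * (v 0 + X * U) ≤ v 0 + X * U :=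
      mul_le_of_le_one_left (add_nonneg hv0 hXU) hrk1
    have hY' : Y * (1 - r ^ k) ≤ Y :=
      mul_le_of_le_one_right hY0 (by linarith [pow_nonneg (le_of_lt hr0) k])
    rw [h3] at h2
    linarith
  have := huv k
  rw [hY, hX] at h4
  linarith
end

section
/- Let d be a positive integer, let V be a real normed vector space, let a₁ > 0 and q > 0 be real numbers, and let g : ℝ^d × ℝ^d → V satisfy, for all x, x̄, y, ȳ ∈ ℝ^d, ‖g(x,y) − g(x̄,ȳ)‖² ≤ a₁·(|x−x̄|² + |y−ȳ|²)·(1 + |x|^q + |x̄|^q + |y|^q + |ȳ|^q), where |·| is the Euclidean norm on ℝ^d and powers are real powers. Then for all x, y ∈ ℝ^d: ‖g(x,y)‖ ≤ (3√a₁ + ‖g(0,0)‖)·(1 + |x|^{(q/2)+1} + |y|^{(q/2)+1}). -/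
private lemma aux_sq_le (X q : ℝ) (hX : 0 ≤ X) (hq : 0 < q) :
    X ^ 2 ≤ 1 + X ^ (q + 2) := by
  rcases le_total X 1 with h | h
  · have h1 : X ^ 2 ≤ 1 := by nlinarith
    have h2 : (0:ℝ) ≤ X ^ (q+2) := Real.rpow_nonneg hX _
    linarith
  · have h1 : X ^ (2:ℝ) ≤ X ^ (q + 2) :=
      Real.rpow_le_rpow_of_exponent_le h (by linarith)
    have h2 : X ^ (2:ℝ) = X ^ 2 := by
      rw [show ((2:ℝ)) = ((2:ℕ):ℝ) by norm_num, Real.rpow_natCast]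
    rw [h2] at h1
    linarith

private lemma aux_split (Y q : ℝ) (hY : 0 ≤ Y) (hq : 0 < q) :
    Y ^ (q + 2) = Y ^ 2 * Y ^ q := by
  rw [Real.rpow_add' hY (by intro h; linarith : q + 2 ≠ 0)]
  rw [show ((2:ℝ)) = ((2:ℕ):ℝ) by norm_num, Real.rpow_natCast]
  ring

private lemma aux_cross (X Y q : ℝ) (hX : 0 ≤ X) (hY : 0 ≤ Y) (hq : 0 < q) :
    X ^ 2 * Y ^ q ≤ X ^ (q + 2) + Y ^ (q + 2) := by
  rcases le_total X Y with h | h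
  · have h1 : X ^ 2 ≤ Y ^ 2 := by nlinarith
    have h2 : X ^ 2 * Y ^ q ≤ Y ^ 2 * Y ^ q :=
      mul_le_mul_of_nonneg_right h1 (Real.rpow_nonneg hY _)
    rw [← aux_split Y q hY hq] at h2
    have h3 : (0:ℝ) ≤ X ^ (q + 2) := Real.rpow_nonneg hX _
    linarith
  · have h1 : Y ^ q ≤ X ^ q := Real.rpow_le_rpow hY h hq.le
    have h2 : X ^ 2 * Y ^ q ≤ X ^ 2 * X ^ q :=
      mul_le_mul_of_nonneg_left h1 (by positivity)
    rw [← aux_split X q hX hq] at h2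
    have h3 : (0:ℝ) ≤ Y ^ (q + 2) := Real.rpow_nonneg hY _
    linarith

set_option maxHeartbeats 1600000

theorem stmt_12 (d : ℕ) (hd : 0 < d) (V : Type*) [NormedAddCommGroup V] [NormedSpace ℝ V]
    (a₁ q : ℝ) (ha₁ : 0 < a₁) (hq : 0 < q)
    (g : EuclideanSpace ℝ (Fin d) → EuclideanSpace ℝ (Fin d) → V)
    (hg : ∀ x x' y y' : EuclideanSpace ℝ (Fin d),
      ‖g x y - g x' y'‖ ^ 2 ≤ a₁ * (‖x - x'‖ ^ 2 + ‖y - y'‖ ^ 2)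
        * (1 + ‖x‖ ^ q + ‖x'‖ ^ q + ‖y‖ ^ q + ‖y'‖ ^ q)) :
    ∀ x y : EuclideanSpace ℝ (Fin d),
      ‖g x y‖ ≤ (3 * Real.sqrt a₁ + ‖g 0 0‖)
        * (1 + ‖x‖ ^ (q / 2 + 1) + ‖y‖ ^ (q / 2 + 1)) := by
  intro x y
  set X := ‖x‖ with hXdef
  set Y := ‖y‖ with hYdef
  have hX : 0 ≤ X := norm_nonneg _
  have hY : 0 ≤ Y := norm_nonneg _
  set A := X ^ (q / 2 + 1) with hAdef
  set B := Y ^ (q / 2 + 1) with hBdef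
  have hA : 0 ≤ A := Real.rpow_nonneg hX _
  have hB : 0 ≤ B := Real.rpow_nonneg hY _
  have hA2 : A ^ 2 = X ^ (q + 2) := by
    rw [hAdef, ← Real.rpow_natCast (X ^ (q/2+1)) 2, ← Real.rpow_mul hX]
    norm_num; ring_nf
  have hB2 : B ^ 2 = Y ^ (q + 2) := by
    rw [hBdef, ← Real.rpow_natCast (Y ^ (q/2+1)) 2, ← Real.rpow_mul hY]
    norm_num; ring_nf
  have key := hg x 0 y 0
  have h0 : ‖(0 : EuclideanSpace ℝ (Fin d))‖ = 0 := norm_zero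
  rw [h0, sub_zero, sub_zero] at key
  have h0q : (0:ℝ) ^ q = 0 := Real.zero_rpow (ne_of_gt hq)
  rw [h0q] at key
  have hXq : 0 ≤ X ^ q := Real.rpow_nonneg hX _
  have hYq : 0 ≤ Y ^ q := Real.rpow_nonneg hY _
  have poly : (X ^ 2 + Y ^ 2) * (1 + X ^ q + Y ^ q) ≤ 5 * (1 + A ^ 2 + B ^ 2) := by
    have h1 := aux_sq_le X q hX hq
    have h2 := aux_sq_le Y q hY hq
    have h3 := aux_cross X X q hX hX hq
    have h4 := aux_cross X Y q hX hY hq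
    have h5 := aux_cross Y X q hY hX hq
    have h6 := aux_cross Y Y q hY hY hq
    rw [hA2, hB2]
    have expand : (X ^ 2 + Y ^ 2) * (1 + X ^ q + Y ^ q)
        = X ^ 2 + Y ^ 2 + X ^ 2 * X ^ q + X ^ 2 * Y ^ q + Y ^ 2 * X ^ q + Y ^ 2 * Y ^ q := by
      ring
    rw [expand]
    linarith
  have hsa : 0 ≤ Real.sqrt a₁ := Real.sqrt_nonneg _
  have hsa2 : Real.sqrt a₁ ^ 2 = a₁ := Real.sq_sqrt ha₁.le
  set K := 3 * Real.sqrt a₁ * (1 + A + B) with hKdef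
  have hK : 0 ≤ K := by positivity
  have hK2 : ‖g x y - g 0 0‖ ^ 2 ≤ K ^ 2 := by
    have hsq : (1 + A ^ 2 + B ^ 2) ≤ (1 + A + B) ^ 2 := by nlinarith
    have hmul : a₁ * ((X ^ 2 + Y ^ 2) * (1 + X ^ q + Y ^ q)) ≤ a₁ * (9 * (1 + A + B) ^ 2) := by
      apply mul_le_mul_of_nonneg_left _ ha₁.le
      calc (X ^ 2 + Y ^ 2) * (1 + X ^ q + Y ^ q) ≤ 5 * (1 + A ^ 2 + B ^ 2) := poly
        _ ≤ 5 * (1 + A + B) ^ 2 := by linarith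
        _ ≤ 9 * (1 + A + B) ^ 2 := by nlinarith [sq_nonneg (1 + A + B)]
    have hKsq : K ^ 2 = a₁ * (9 * (1 + A + B) ^ 2) := by
      rw [hKdef, mul_pow, mul_pow, hsa2]; ring
    calc ‖g x y - g 0 0‖ ^ 2 ≤ a₁ * (X ^ 2 + Y ^ 2) * (1 + X ^ q + 0 + Y ^ q + 0) := key
      _ = a₁ * ((X ^ 2 + Y ^ 2) * (1 + X ^ q + Y ^ q)) := by ring
      _ ≤ a₁ * (9 * (1 + A + B) ^ 2) := hmul
      _ = K ^ 2 := hKsq.symm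
  have hgK : ‖g x y - g 0 0‖ ≤ K := by
    nlinarith [norm_nonneg (g x y - g 0 0), hK]
  have htri : ‖g x y‖ - ‖g 0 0‖ ≤ ‖g x y - g 0 0‖ := norm_sub_norm_le _ _
  have hg00 : 0 ≤ ‖g 0 0‖ := norm_nonneg _
  nlinarith [mul_nonneg hg00 (add_nonneg hA hB), mul_nonneg hsa (add_nonneg hA hB)]
end

section
/- Let M ≥ 1 and N ≥ 1 be integers, Δ > 0, and let c₁ > 0, b₄ ≥ 0, c ≥ 0 be real numbers; set T = NΔ and τ = MΔ. Let u : {−M, −M+1, …, N} → [0,∞) satisfy u_k ≤ (1 + c₁Δ)·u_{k−1} + c₁Δ·u_{k−M−1} + b₄Δ·u_{k−M} + cΔ for all k with 1 ≤ k ≤ N and k − M − 1 ≥ −M. Then, with C := e^{2c₁T + 2(c₁+b₄)·T·e^{2c₁T}}, for all 0 ≤ k ≤ N: u_k ≤ (c/c₁)·C + (1 + 2(c₁+b₄)τ)·C·max_{−M ≤ i ≤ 0} u_i. -/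
theorem stmt_14 (M N : ℕ) (hM : 1 ≤ M) (hN : 1 ≤ N) (Δ : ℝ) (hΔ : 0 < Δ)
    (c₁ b₄ c : ℝ) (hc₁ : 0 < c₁) (hb₄ : 0 ≤ b₄) (hc : 0 ≤ c)
    (T τ : ℝ) (hT : T = N * Δ) (hτ : τ = M * Δ)
    (u : ℤ → ℝ)
    (hu_nonneg : ∀ i : ℤ, -(M : ℤ) - 1 ≤ i → i ≤ N → 0 ≤ u i)
    (hu_ext : u (-(M : ℤ) - 1) = u (-(M : ℤ)))
    (hrec : ∀ k : ℤ, 1 ≤ k → k ≤ N →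
      u k ≤ (1 + c₁ * Δ) * u (k - 1) + c₁ * Δ * u (k - M - 1)
        + b₄ * Δ * u (k - M) + c * Δ) :
    ∀ k : ℤ, 0 ≤ k → k ≤ N →
      u k ≤ (c / c₁) * Real.exp (2 * c₁ * T + 2 * (c₁ + b₄) * T * Real.exp (2 * c₁ * T))
        + (1 + 2 * (c₁ + b₄) * τ)
          * Real.exp (2 * c₁ * T + 2 * (c₁ + b₄) * T * Real.exp (2 * c₁ * T))
          * ((Finset.Icc (-(M : ℤ)) 0).sup' (Finset.nonempty_Icc.mpr (by omega)) u) := by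
  have hne : (Finset.Icc (-(M : ℤ)) 0).Nonempty := Finset.nonempty_Icc.mpr (by omega)
  set U0 := (Finset.Icc (-(M : ℤ)) 0).sup' hne u with hU0
  have hU0le : ∀ i : ℤ, -(M : ℤ) ≤ i → i ≤ 0 → u i ≤ U0 := fun i h1 h2 =>
    Finset.le_sup' u (Finset.mem_Icc.mpr ⟨h1, h2⟩)
  have hU0nn : 0 ≤ U0 := le_trans (hu_nonneg 0 (by omega) (by exact_mod_cast Nat.cast_nonneg N))
    (hU0le 0 (by omega) le_rfl)
  set d := c / (2 * c₁) with hd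
  have hdnn : 0 ≤ d := div_nonneg hc (by linarith)
  have hdc : 2 * c₁ * d = c := by rw [hd]; field_simp
  set r := 1 + (2 * c₁ + b₄) * Δ with hr
  have hr1 : 1 ≤ r := by nlinarith
  set K := U0 + d with hK
  have hKnn : 0 ≤ K := by rw [hK]; exact add_nonneg hU0nn hdnn
  clear_value U0 d r K
  -- main induction
  have key : ∀ n : ℕ, n ≤ N → ∀ i : ℤ, -(M : ℤ) - 1 ≤ i → i ≤ (n : ℤ) → u i + d ≤ K * r ^ n := by
    intro n
    induction n with
    | zero =>
      intro _ i hi1 hi2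
      simp only [Nat.cast_zero, pow_zero, mul_one]
      rcases eq_or_lt_of_le hi1 with h | h
      · rw [← h, hu_ext]
        have := hU0le (-(M : ℤ)) le_rfl (by omega)
        linarith
      · have := hU0le i (by omega) (by exact_mod_cast hi2)
        linarith
    | succ n ih =>
      intro hn i hi1 hi2
      have hnN : n ≤ N := by omega
      rcases eq_or_lt_of_le hi2 with h | h
      · -- i = n+1, use recursion
        have hk1 : (1 : ℤ) ≤ i := by push_cast at h ⊢; omega
        have hkN : i ≤ (N : ℤ) := by push_cast at h ⊢; omega
        have h1 := ih hnN (i - 1) (by omega) (by push_cast at h ⊢; omega)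
        have h2 := ih hnN (i - M - 1) (by omega) (by push_cast at h ⊢; omega)
        have h3 := ih hnN (i - M) (by omega) (by push_cast at h ⊢; omega)
        have hrec' := hrec i hk1 hkN
        have hdcΔ : 2 * c₁ * d * Δ = c * Δ := by rw [hdc]
        have hbdd : 0 ≤ b₄ * Δ * d := by positivity
        have e1 : (1 + c₁ * Δ) * u (i-1) ≤ (1 + c₁ * Δ) * (K * r ^ n - d) :=
          mul_le_mul_of_nonneg_left (by linarith) (by nlinarith)
        have e2 : c₁ * Δ * u (i-(M:ℤ)-1) ≤ c₁ * Δ * (K * r ^ n - d) :=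
          mul_le_mul_of_nonneg_left (by linarith) (by positivity)
        have e3 : b₄ * Δ * u (i-(M:ℤ)) ≤ b₄ * Δ * (K * r ^ n - d) :=
          mul_le_mul_of_nonneg_left (by linarith) (by positivity)
        have hgoal : u i + d ≤ (1 + (2 * c₁ + b₄) * Δ) * (K * r ^ n) := by
          nlinarith [e1, e2, e3, hrec', hdcΔ, hbdd]
        calc u i + d ≤ (1 + (2 * c₁ + b₄) * Δ) * (K * r ^ n) := hgoal
          _ = K * r ^ (n + 1) := by rw [hr]; ring
      · -- i ≤ n, use IH and monotonicity
        have := ih hnN i hi1 (by omega)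
        have : K * r ^ n ≤ K * r ^ (n + 1) := by
          apply mul_le_mul_of_nonneg_left _ hKnn
          exact pow_le_pow_right₀ (by linarith) (by omega)
        linarith [ih hnN i hi1 (by omega)]
  -- conclude
  intro k hk0 hkN
  have hmain := key N le_rfl k (by omega) hkN
  have hTnn : 0 ≤ T := by rw [hT]; positivity
  set E := Real.exp (2 * c₁ * T) with hE
  have hE1 : 1 ≤ E := by rw [hE]; exact Real.one_le_exp (by positivity)
  set C := Real.exp (2 * c₁ * T + 2 * (c₁ + b₄) * T * E) with hC
  clear_value E C
  have h0E : (0:ℝ) ≤ 2 * (c₁ + b₄) * T * E :=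
    mul_nonneg (by positivity) (by linarith)
  have hC1 : 1 ≤ C := by
    have h1 : (0:ℝ) ≤ 2 * c₁ * T := by positivity
    rw [hC]; exact Real.one_le_exp (by linarith)
  -- r^N ≤ C
  have hrC : r ^ N ≤ C := by
    have step1 : r ≤ Real.exp ((2 * c₁ + b₄) * Δ) := by
      have := Real.add_one_le_exp ((2 * c₁ + b₄) * Δ)
      linarith
    have step2 : r ^ N ≤ Real.exp ((2 * c₁ + b₄) * Δ) ^ N :=
      pow_le_pow_left₀ (by linarith) step1 N
    have step3 : Real.exp ((2 * c₁ + b₄) * Δ) ^ N = Real.exp ((2 * c₁ + b₄) * T) := by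
      rw [← Real.exp_nat_mul, hT]; ring_nf
    have step4 : Real.exp ((2 * c₁ + b₄) * T) ≤ C := by
      rw [hC]
      apply Real.exp_le_exp.mpr
      have hmm : 2 * (c₁ + b₄) * T * 1 ≤ 2 * (c₁ + b₄) * T * E :=
        mul_le_mul_of_nonneg_left hE1 (by positivity)
      have hbT : 0 ≤ b₄ * T := by positivity
      have hcT : 0 ≤ c₁ * T := by positivity
      linarith
    calc r ^ N ≤ Real.exp ((2 * c₁ + b₄) * Δ) ^ N := step2
      _ = Real.exp ((2 * c₁ + b₄) * T) := step3
      _ ≤ C := step4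
  have hCnn : 0 ≤ C := by linarith
  have huk : u k ≤ K * C := by
    have : K * r ^ N ≤ K * C := mul_le_mul_of_nonneg_left hrC hKnn
    linarith
  have hτnn : 0 ≤ τ := by rw [hτ]; positivity
  have hdle : d ≤ c / c₁ := by
    rw [le_div_iff₀ hc₁]
    have h1 : 0 ≤ c₁ * d := mul_nonneg hc₁.le hdnn
    linarith [hdc]
  have hfinal : K * C ≤ (c / c₁) * C + (1 + 2 * (c₁ + b₄) * τ) * C * U0 := by
    have hKC : K * C = U0 * C + d * C := by rw [hK]; ring
    have h1 : d * C ≤ (c / c₁) * C := mul_le_mul_of_nonneg_right hdle hCnn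
    have h2 : U0 * C ≤ (1 + 2 * (c₁ + b₄) * τ) * C * U0 := by
      have h0 : 0 ≤ 2 * (c₁ + b₄) * τ * C * U0 :=
        mul_nonneg (mul_nonneg (by positivity) hCnn) hU0nn
      linarith [h0]
    linarith [hKC.le, hKC.ge]
  exact le_trans huk hfinal
end
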